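/- arXiv:2202.13182 — 5 statements merged into one kernel-verified Lean document; each statement's English description precedes it below -/
import Mathlib

section
/- The only solutions (n, m, a) in nonnegative integers with n ≥ m of the exponential Diophantine equation L_n + L_m = 3^a are (n, m, a) = (1, 0, 1) and (n, m, a) = (4, 0, 2); that is, L_1 + L_0 = 3 and L_4 + L_0 = 9. -/
/-- The Lucas sequence: `L 0 = 2`, `L 1 = 1`, `L (n+2) = L (n+1) + L n`. -/
def lucas : ℕ → ℕ
  | 0 => 2
  | 1 => 1
  | n + 2 => lucas (n + 1) + lucas n

/-! Modulo `216 = 8 · 27` the Lucas sequence has period `72`, and a finite check shows that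
`L n + L m` is never `≡ 27` or `≡ 81 (mod 216)`. For `a ≥ 3` these are the only residues of `3 ^ a`,
since `3 ^ a = 27 · 3 ^ (a - 3)` and powers of `3` are `≡ 1` or `≡ 3 (mod 8)`. Hence `a ≤ 2`, which
bounds `n` and leaves finitely many cases. -/

theorem lucas_add_two (n : ℕ) : lucas (n + 2) = lucas (n + 1) + lucas n := rfl

theorem lucas_pos (n : ℕ) : 0 < lucas n := by
  induction n using Nat.twoStepInduction with
  | zero | one => decide
  | more n _ ih => rw [lucas_add_two]; omega

theorem lucas_monotoneOn : MonotoneOn lucas (Set.Ici 1) :=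
  monotoneOn_nat_Ici_of_le_succ fun n hn => by
    obtain ⟨n, rfl⟩ := Nat.exists_eq_add_of_le' hn
    exact Nat.le_add_right _ _

theorem lucas_mod_periodic {q P : ℕ} (h₀ : lucas P ≡ lucas 0 [MOD q])
    (h₁ : lucas (P + 1) ≡ lucas 1 [MOD q]) : Function.Periodic (fun n => lucas n % q) P := by
  suffices h : ∀ n, lucas (n + P) ≡ lucas n [MOD q] ∧ lucas (n + 1 + P) ≡ lucas (n + 1) [MOD q] from
    fun n => (h n).1
  intro n
  induction n with
  | zero => simpa [add_comm] using ⟨h₀, h₁⟩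
  | succ n ih =>
    refine ⟨ih.2, ?_⟩
    rw [show n + 1 + 1 + P = n + P + 2 by omega, lucas_add_two, lucas_add_two,
      show n + P + 1 = n + 1 + P by omega]
    exact ih.2.add ih.1

theorem lucas_mod_216_periodic : Function.Periodic (fun n => lucas n % 216) 72 :=
  lucas_mod_periodic (by decide) (by decide)

theorem lucas_add_lucas_mod_216 (n m : ℕ) :
    (lucas n + lucas m) % 216 ≠ 27 ∧ (lucas n + lucas m) % 216 ≠ 81 := by
  have hcheck : ∀ i < 72, ∀ j < 72,
      (lucas i % 216 + lucas j % 216) % 216 ≠ 27 ∧ (lucas i % 216 + lucas j % 216) % 216 ≠ 81 := by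
    decide
  have hn := lucas_mod_216_periodic.map_mod_nat n
  have hm := lucas_mod_216_periodic.map_mod_nat m
  rw [Nat.add_mod, ← hn, ← hm]
  exact hcheck _ (Nat.mod_lt _ (by norm_num)) _ (Nat.mod_lt _ (by norm_num))

theorem three_pow_mod_eight (k : ℕ) : 3 ^ k % 8 = 1 ∨ 3 ^ k % 8 = 3 := by
  induction k with
  | zero => decide
  | succ k ih => rw [pow_succ]; omega

theorem three_pow_mod_216 {a : ℕ} (ha : 3 ≤ a) : 3 ^ a % 216 = 27 ∨ 3 ^ a % 216 = 81 := by
  obtain ⟨k, rfl⟩ := Nat.exists_eq_add_of_le' ha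
  rw [pow_add, mul_comm, show (216 : ℕ) = 27 * 8 by rfl, show 3 ^ 3 = 27 by rfl,
    Nat.mul_mod_mul_left]
  have := three_pow_mod_eight k
  omega

/-- The only solutions `(n, m, a)` in nonnegative integers with `n ≥ m` of the
exponential Diophantine equation `L n + L m = 3 ^ a` are `(1, 0, 1)` and `(4, 0, 2)`. -/
theorem lucas_sum_eq_pow_three (n m a : ℕ) (h : m ≤ n) :
    lucas n + lucas m = 3 ^ a ↔
      (n = 1 ∧ m = 0 ∧ a = 1) ∨ (n = 4 ∧ m = 0 ∧ a = 2) := by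
  refine ⟨fun heq => ?_, by rintro (⟨rfl, rfl, rfl⟩ | ⟨rfl, rfl, rfl⟩) <;> rfl⟩
  have ha : a ≤ 2 := by
    by_contra! ha
    have hsum := lucas_add_lucas_mod_216 n m
    rw [heq] at hsum
    have := three_pow_mod_216 ha
    omega
  have hn : n ≤ 4 := by
    by_contra! hn
    have h11 : lucas 5 ≤ lucas n := lucas_monotoneOn (by simp) (Set.mem_Ici.2 (by omega)) hn
    have h9 : 3 ^ a ≤ 3 ^ 2 := Nat.pow_le_pow_right (by norm_num) ha
    have := lucas_pos m
    simp only [lucas] at h11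
    omega
  interval_cases n <;> interval_cases m <;> interval_cases a <;> simp_all [lucas]
end

section
/- If n, m, a are nonnegative integers with n > m, n ≥ 2, and L_n + L_m = 3^a, then |1 − 3^a·α^{−n}| < 3/α^{n−m}. -/
/-- The golden ratio `α = (1 + √5)/2`. -/
noncomputable def α : ℝ := (1 + Real.sqrt 5) / 2

noncomputable def βr : ℝ := (1 - Real.sqrt 5) / 2

lemma sqrt5_sq : Real.sqrt 5 ^ 2 = 5 := Real.sq_sqrt (by norm_num)

lemma sqrt5_lt : Real.sqrt 5 < 3 := by
  nlinarith [sqrt5_sq, Real.sqrt_nonneg 5]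

lemma sqrt5_gt : 2 < Real.sqrt 5 := by
  nlinarith [sqrt5_sq, Real.sqrt_nonneg 5]

lemma α_gt_one : 1 < α := by
  unfold α; nlinarith [sqrt5_gt]

lemma α_pos : 0 < α := lt_trans one_pos α_gt_one

lemma abs_βr_lt_one : |βr| < 1 := by
  rw [abs_lt]; unfold βr; constructor <;> nlinarith [sqrt5_gt, sqrt5_lt]

lemma α_sq : α ^ 2 = α + 1 := by
  unfold α; nlinarith [sqrt5_sq]

lemma βr_sq : βr ^ 2 = βr + 1 := by
  unfold βr; nlinarith [sqrt5_sq]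

lemma lucas_binet : ∀ n, (lucas n : ℝ) = α ^ n + βr ^ n
  | 0 => by norm_num [lucas]
  | 1 => by norm_num [lucas]; unfold α βr; ring
  | (n + 2) => by
    have h1 := lucas_binet (n + 1)
    have h2 := lucas_binet n
    have : (lucas (n + 2) : ℝ) = (lucas (n + 1) : ℝ) + (lucas n : ℝ) := by
      rw [lucas]; push_cast; ring
    rw [this, h1, h2]
    have e1 : α ^ (n + 2) = α ^ n * α ^ 2 := by ring
    have e2 : βr ^ (n + 2) = βr ^ n * βr ^ 2 := by ring
    rw [e1, e2, α_sq, βr_sq]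
    ring

/-- If `n > m`, `n ≥ 2` and `L n + L m = 3^a`, then `|1 − 3^a·α^(−n)| < 3/α^(n−m)`. -/
theorem abs_one_sub_pow_lt (n m a : ℕ) (hnm : m < n) (hn : 2 ≤ n)
    (h : lucas n + lucas m = 3 ^ a) :
    |1 - (3 : ℝ) ^ a * α ^ (-(n : ℤ))| < 3 / α ^ (n - m) := by
  have hα := α_pos
  have hα1 := α_gt_one
  have h3 : ((3 : ℝ)) ^ a = α ^ n + βr ^ n + (α ^ m + βr ^ m) := by
    have := congrArg (fun x : ℕ => (x : ℝ)) h
    push_cast at this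
    rw [lucas_binet n, lucas_binet m] at this
    push_cast
    linarith [this]
  have hzpow : α ^ (-(n : ℤ)) = (α ^ n)⁻¹ := by
    rw [zpow_neg, zpow_natCast]
  have hαn : (0:ℝ) < α ^ n := pow_pos hα n
  have key : |1 - (3 : ℝ) ^ a * α ^ (-(n : ℤ))| =
      |βr ^ n + (α ^ m + βr ^ m)| / α ^ n := by
    have e : 1 - (3 : ℝ) ^ a * (α ^ n)⁻¹ = -(βr ^ n + (α ^ m + βr ^ m)) / α ^ n := by
      field_simp
      rw [h3]; ring
    rw [hzpow, e, abs_div, abs_neg, abs_of_pos hαn]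
  rw [key]
  -- bound numerator
  have hβn : |βr ^ n| < 1 := by
    rw [abs_pow]
    calc |βr| ^ n ≤ |βr| ^ 1 :=
      pow_le_pow_of_le_one (abs_nonneg _) (le_of_lt abs_βr_lt_one) (by omega)
    _ < 1 := by simpa using abs_βr_lt_one
  have hβm : |βr ^ m| ≤ 1 := by
    rw [abs_pow]
    exact pow_le_one₀ (abs_nonneg _) (le_of_lt abs_βr_lt_one)
  have hαm : (1:ℝ) ≤ α ^ m := one_le_pow₀ (le_of_lt hα1)
  have hnum : |βr ^ n + (α ^ m + βr ^ m)| < 3 * α ^ m := by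
    calc |βr ^ n + (α ^ m + βr ^ m)| ≤ |βr ^ n| + (α ^ m + |βr ^ m|) := by
          have := abs_add_le (βr ^ n) (α ^ m + βr ^ m)
          have h2 := abs_add_le (α ^ m) (βr ^ m)
          have : |α ^ m + βr ^ m| ≤ α ^ m + |βr ^ m| := by
            calc |α ^ m + βr ^ m| ≤ |α ^ m| + |βr ^ m| := abs_add_le _ _
            _ = α ^ m + |βr ^ m| := by rw [abs_of_pos (pow_pos hα m)]
          calc |βr ^ n + (α ^ m + βr ^ m)| ≤ |βr ^ n| + |α ^ m + βr ^ m| := abs_add_le _ _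
          _ ≤ |βr ^ n| + (α ^ m + |βr ^ m|) := by linarith
      _ < 1 + (α ^ m + 1) := by linarith
      _ ≤ 3 * α ^ m := by linarith
  have hpow : α ^ (n - m) = α ^ n / α ^ m := pow_sub₀ α (ne_of_gt hα) (le_of_lt hnm)
  rw [hpow]
  rw [div_lt_div_iff₀ hαn (by positivity)]
  have hαm0 : (0:ℝ) < α ^ m := pow_pos hα m
  calc |βr ^ n + (α ^ m + βr ^ m)| * (α ^ n / α ^ m)
      = |βr ^ n + (α ^ m + βr ^ m)| / α ^ m * α ^ n := by ring
    _ < 3 * α ^ n := by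
        apply mul_lt_mul_of_pos_right _ hαn
        rw [div_lt_iff₀ hαm0]
        calc |βr ^ n + (α ^ m + βr ^ m)| < 3 * α ^ m := hnum
        _ = 3 * α ^ m := rfl
    _ = 3 * α ^ n := rfl
end

section
/- If n, m, a are nonnegative integers with n > m, n ≥ 2, and L_n + L_m = 3^a, then 0 < a·log 3 − n·log α < 3/α^{n−m}. -/
/-!
Binet's formula `L_k = φ^k + ψ^k` with `|ψ| < 1` gives `φ^n < L_n + L_m ≤ φ^n + φ^m + 2
≤ φ^n (1 + 3/φ^(n-m))`. Taking logarithms and using `log (1 + x) < x` for `x > 0` bounds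
`log 3^a - log φ^n`.
-/

open Real
open scoped goldenRatio

lemma α_eq_goldenRatio : α = φ := rfl

theorem lucas_eq_goldenRatio_pow_add_goldenConj_pow : ∀ n, (lucas n : ℝ) = φ ^ n + ψ ^ n
  | 0 => by norm_num [lucas]
  | 1 => by norm_num [lucas, goldenRatio_add_goldenConj]
  | n + 2 => by
    rw [lucas, Nat.cast_add, lucas_eq_goldenRatio_pow_add_goldenConj_pow (n + 1),
      lucas_eq_goldenRatio_pow_add_goldenConj_pow n]
    linear_combination (-φ ^ n) * goldenRatio_sq - ψ ^ n * goldenConj_sq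

theorem one_le_lucas : ∀ n, 1 ≤ lucas n
  | 0 | 1 => by simp [lucas]
  | n + 2 => by rw [lucas]; have := one_le_lucas n; omega

theorem abs_goldenConj_pow_lt_one {n : ℕ} (hn : n ≠ 0) : |ψ ^ n| < 1 := by
  rw [abs_pow]
  have hψ : |ψ| < 1 := abs_lt.2 ⟨neg_one_lt_goldenConj, goldenConj_neg.trans one_pos⟩
  exact pow_lt_one₀ (abs_nonneg ψ) hψ hn

theorem abs_goldenConj_pow_le_one (n : ℕ) : |ψ ^ n| ≤ 1 := by
  rcases eq_or_ne n 0 with rfl | hn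
  · simp
  · exact (abs_goldenConj_pow_lt_one hn).le

section
variable {m n : ℕ}

theorem goldenRatio_pow_lt_lucas_add_lucas (hmn : m < n) : φ ^ n < lucas n + lucas m := by
  have hψ := abs_lt.1 (abs_goldenConj_pow_lt_one (n := n) (by omega))
  have hm : (1 : ℝ) ≤ lucas m := by exact_mod_cast one_le_lucas m
  rw [lucas_eq_goldenRatio_pow_add_goldenConj_pow n]
  linarith [hψ.1]

theorem lucas_add_lucas_le (hmn : m < n) :
    (lucas n + lucas m : ℝ) ≤ φ ^ n * (1 + 3 / φ ^ (n - m)) := by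
  have hψn := (abs_le.1 (abs_goldenConj_pow_le_one n)).2
  have hψm := (abs_le.1 (abs_goldenConj_pow_le_one m)).2
  have hφm : 1 ≤ φ ^ m := one_le_pow₀ one_lt_goldenRatio.le
  have hsplit : φ ^ n = φ ^ m * φ ^ (n - m) := by rw [← pow_add, Nat.add_sub_cancel' hmn.le]
  calc (lucas n + lucas m : ℝ)
      = φ ^ n + ψ ^ n + (φ ^ m + ψ ^ m) := by
        simp only [lucas_eq_goldenRatio_pow_add_goldenConj_pow]
    _ ≤ φ ^ n + 3 * φ ^ m := by linarith
    _ = φ ^ n * (1 + 3 / φ ^ (n - m)) := by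
        rw [hsplit]; field_simp
end

theorem log_sub_log_mem_Ioo {x y ε : ℝ} (hy : 0 < y) (hyx : y < x) (hx : x ≤ y * (1 + ε)) :
    0 < log x - log y ∧ log x - log y < ε := by
  have hε : 0 < ε := by nlinarith
  refine ⟨sub_pos.2 (log_lt_log hy hyx), ?_⟩
  calc log x - log y
      ≤ log (y * (1 + ε)) - log y := by gcongr; linarith
    _ = log (1 + ε) := by rw [log_mul hy.ne' (by linarith), add_sub_cancel_left]
    _ < ε := by linarith [log_lt_sub_one_of_pos (x := 1 + ε) (by linarith) (by linarith)]

theorem linear_form_bounds_general (n m a : ℕ) (hnm : m < n)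
    (h : lucas n + lucas m = 3 ^ a) :
    0 < (a : ℝ) * Real.log 3 - (n : ℝ) * Real.log α ∧
    (a : ℝ) * Real.log 3 - (n : ℝ) * Real.log α < 3 / α ^ (n - m) := by
  have hsum : (lucas n + lucas m : ℝ) = 3 ^ a := by exact_mod_cast h
  rw [α_eq_goldenRatio, ← log_pow, ← log_pow, ← hsum]
  exact log_sub_log_mem_Ioo (pow_pos goldenRatio_pos n)
    (goldenRatio_pow_lt_lucas_add_lucas hnm) (lucas_add_lucas_le hnm)

/-- If `n > m`, `n ≥ 2` and `L n + L m = 3^a`, then `0 < a·log 3 − n·log α < 3/α^(n−m)`. -/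
theorem linear_form_bounds (n m a : ℕ) (hnm : m < n) (hn : 2 ≤ n)
    (h : lucas n + lucas m = 3 ^ a) :
    0 < (a : ℝ) * Real.log 3 - (n : ℝ) * Real.log α ∧
    (a : ℝ) * Real.log 3 - (n : ℝ) * Real.log α < 3 / α ^ (n - m) :=
  linear_form_bounds_general n m a hnm h
end

section
/- If n, m, a are nonnegative integers with n > m, n > 200, and L_n + L_m = 3^a, then |1 − 3^a·α^{−n}·(1 + α^{m−n})^{−1}| < 2/α^n. -/
/-- The conjugate root `β = (1 - √5)/2`. -/
noncomputable def lucasβ : ℝ := (1 - Real.sqrt 5) / 2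

lemma lucas_eq (k : ℕ) : (lucas k : ℝ) = α ^ k + lucasβ ^ k := by
  have hα : α ^ 2 = α + 1 := by
    unfold α; nlinarith [sqrt5_sq]
  have hβ : lucasβ ^ 2 = lucasβ + 1 := by
    unfold lucasβ; nlinarith [sqrt5_sq]
  induction k using Nat.twoStepInduction with
  | zero => norm_num [lucas]
  | one => norm_num [lucas]; unfold α lucasβ; ring
  | more k ih1 ih2 =>
    have : lucas (k + 2) = lucas (k + 1) + lucas k := rfl
    rw [this]
    push_cast
    rw [ih1, ih2]
    have e1 : α ^ (k + 2) = α ^ k * α ^ 2 := by ring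
    have e2 : lucasβ ^ (k + 2) = lucasβ ^ k * lucasβ ^ 2 := by ring
    rw [e1, e2, hα, hβ]
    ring

/-- If `n > m`, `n > 200` and `L n + L m = 3^a`, then
`|1 − 3^a·α^(−n)·(1 + α^(m−n))⁻¹| < 2/α^n`. -/
theorem abs_Lambda_lt (n m a : ℕ) (hnm : m < n) (hn : 200 < n)
    (h : lucas n + lucas m = 3 ^ a) :
    |1 - (3 : ℝ) ^ a * α ^ (-(n : ℤ)) * (1 + α ^ ((m : ℤ) - (n : ℤ)))⁻¹| < 2 / α ^ n := by
  have h5 := sqrt5_sq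
  have hs5 : (2:ℝ) < Real.sqrt 5 := by nlinarith [Real.sqrt_nonneg 5]
  have hα1 : (1:ℝ) < α := by unfold α; nlinarith
  have hαpos : (0:ℝ) < α := lt_trans one_pos hα1
  have hβlt : |lucasβ| < 1 := by
    rw [abs_lt]; constructor <;> (unfold lucasβ; nlinarith)
  have hA : (0:ℝ) < α ^ n := pow_pos hαpos n
  have hB : (0:ℝ) < α ^ m := pow_pos hαpos m
  have hz1 : α ^ (-(n:ℤ)) = (α ^ n)⁻¹ := by
    rw [zpow_neg, zpow_natCast]
  have hz2 : α ^ ((m:ℤ) - (n:ℤ)) = α ^ m / α ^ n := by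
    rw [zpow_sub₀ (ne_of_gt hαpos), zpow_natCast, zpow_natCast]
  have hL : (3:ℝ) ^ a = α ^ n + lucasβ ^ n + (α ^ m + lucasβ ^ m) := by
    have hc : ((lucas n + lucas m : ℕ) : ℝ) = ((3 ^ a : ℕ) : ℝ) := by
      exact_mod_cast h
    push_cast at hc
    rw [lucas_eq n, lucas_eq m] at hc
    linarith
  have key : 1 - (3 : ℝ) ^ a * α ^ (-(n : ℤ)) * (1 + α ^ ((m : ℤ) - (n : ℤ)))⁻¹
      = -(lucasβ ^ n + lucasβ ^ m) / (α ^ n + α ^ m) := by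
    rw [hz1, hz2, hL]
    have hAB : (0:ℝ) < α ^ n + α ^ m := by linarith
    field_simp
    ring
  rw [key, abs_div, abs_neg]
  have hABabs : |α ^ n + α ^ m| = α ^ n + α ^ m := abs_of_pos (by linarith)
  rw [hABabs]
  have hnum : |lucasβ ^ n + lucasβ ^ m| < 2 := by
    have h1 : |lucasβ ^ n + lucasβ ^ m| ≤ |lucasβ| ^ n + |lucasβ| ^ m := by
      calc |lucasβ ^ n + lucasβ ^ m| ≤ |lucasβ ^ n| + |lucasβ ^ m| := abs_add_le _ _
        _ = |lucasβ| ^ n + |lucasβ| ^ m := by rw [abs_pow, abs_pow]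
    have h2 : |lucasβ| ^ n < 1 := pow_lt_one₀ (abs_nonneg _) hβlt (by omega)
    have h3 : |lucasβ| ^ m ≤ 1 := pow_le_one₀ (abs_nonneg _) hβlt.le
    linarith
  calc |lucasβ ^ n + lucasβ ^ m| / (α ^ n + α ^ m)
      ≤ |lucasβ ^ n + lucasβ ^ m| / α ^ n := by
        apply div_le_div_of_nonneg_left (abs_nonneg _) hA (by linarith)
    _ < 2 / α ^ n := by gcongr
end

section
/- For all nonnegative integers n, m, a with 0 ≤ m < n ≤ 200, the equation L_n + L_m = 3^a holds only for (n, m, a) = (1, 0, 1) and (n, m, a) = (4, 0, 2). -/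
/-- Linear-time computation of consecutive Lucas numbers. -/
def lucasAux : ℕ → ℕ × ℕ
  | 0 => (2, 1)
  | n + 1 => let p := lucasAux n; (p.2, p.1 + p.2)

lemma lucasAux_spec : ∀ n, lucasAux n = (lucas n, lucas (n + 1))
  | 0 => rfl
  | n + 1 => by simp [lucasAux, lucasAux_spec n, lucas, Nat.add_comm]

def lucasFast (n : ℕ) : ℕ := (lucasAux n).1

lemma lucasFast_eq (n : ℕ) : lucasFast n = lucas n := by
  simp [lucasFast, lucasAux_spec]

/-- Fueled check that `v` is a power of 3. -/
def isPow3 : ℕ → ℕ → Bool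
  | 0, v => v == 1
  | f + 1, v => v == 1 || (v % 3 == 0 && isPow3 f (v / 3))

lemma isPow3_pow : ∀ a f, a ≤ f → isPow3 (f + 1) (3 ^ a) = true := by
  intro a
  induction a with
  | zero => intro f _; cases f <;> simp [isPow3]
  | succ a ih =>
    intro f hf
    obtain ⟨f', rfl⟩ : ∃ f', f = f' + 1 := ⟨f - 1, by omega⟩
    have h3 : (3 : ℕ) ^ (a + 1) % 3 = 0 := by
      simp [pow_succ, Nat.mul_mod_left]
    have hd : (3 : ℕ) ^ (a + 1) / 3 = 3 ^ a := by
      rw [pow_succ, Nat.mul_div_cancel] ; omega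
    have hih := ih f' (by omega)
    show isPow3 (f' + 1 + 1) (3 ^ (a + 1)) = true
    conv_lhs => rw [isPow3]
    rw [hd]
    simp [h3, hih]

lemma lucas_le_two_pow : ∀ n, lucas n ≤ 2 ^ (n + 1)
  | 0 => by norm_num [lucas]
  | 1 => by norm_num [lucas]
  | n + 2 => by
    have h1 := lucas_le_two_pow (n + 1)
    have h2 := lucas_le_two_pow n
    have e1 : (2 : ℕ) ^ (n + 3) = 2 * 2 ^ (n + 2) := by ring
    have e2 : (2 : ℕ) ^ (n + 2) = 2 * 2 ^ (n + 1) := by ring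
    simp only [lucas]
    omega

set_option maxRecDepth 100000 in
lemma key : ∀ n < 201, ∀ m < n,
    isPow3 128 (lucasFast n + lucasFast m) = true →
      (n = 1 ∧ m = 0) ∨ (n = 4 ∧ m = 0) := by decide

/-- For all nonnegative integers `n, m, a` with `0 ≤ m < n ≤ 200`, the equation
`L n + L m = 3^a` holds only for `(n, m, a) = (1, 0, 1)` and `(n, m, a) = (4, 0, 2)`. -/
theorem lucas_sum_eq_pow_three_small (n m a : ℕ) (hmn : m < n) (hn : n ≤ 200)
    (h : lucas n + lucas m = 3 ^ a) :
    (n = 1 ∧ m = 0 ∧ a = 1) ∨ (n = 4 ∧ m = 0 ∧ a = 2) := by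
  have ha : a ≤ 127 := by
    by_contra hc
    push_neg at hc
    have h1 : lucas n ≤ 2 ^ 201 :=
      (lucas_le_two_pow n).trans (Nat.pow_le_pow_right (by norm_num) (by omega))
    have h2 : lucas m ≤ 2 ^ 201 :=
      (lucas_le_two_pow m).trans (Nat.pow_le_pow_right (by norm_num) (by omega))
    have h3 : (3 : ℕ) ^ 128 ≤ 3 ^ a := Nat.pow_le_pow_right (by norm_num) hc
    have h4 : (2 : ℕ) ^ 201 + 2 ^ 201 < 3 ^ 128 := by norm_num
    omega
  have hp : isPow3 128 (lucasFast n + lucasFast m) = true := by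
    rw [lucasFast_eq, lucasFast_eq, h]
    exact isPow3_pow a 127 ha
  have := key n (by omega) m hmn hp
  rcases this with ⟨rfl, rfl⟩ | ⟨rfl, rfl⟩
  · left
    refine ⟨rfl, rfl, ?_⟩
    have : (3 : ℕ) ^ 1 = 3 ^ a := by simpa [lucas] using h
    exact (Nat.pow_right_injective (by norm_num) this).symm
  · right
    refine ⟨rfl, rfl, ?_⟩
    have : (3 : ℕ) ^ 2 = 3 ^ a := by
      rw [← h]; norm_num [lucas]
    exact (Nat.pow_right_injective (by norm_num) this).symm
end
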